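/- arXiv:2304.09009 — 2 statements merged into one kernel-verified Lean document; each statement's English description precedes it below -/
import Mathlib

section
/- Let R be a commutative ring, M an R-module, t ∈ R, and J = (t) the principal ideal generated by t. Assume that (0 :_M J) = (0 :_R J)·M, i.e., the submodule of elements of M annihilated by J equals the product of the annihilator ideal of J in R with M. Then the natural map J ⊗_R M → J·M, given by j ⊗ x ↦ j·x, is an isomorphism. -/
/-!
Since `J = (t)`, every element of `J ⊗ M` has the form `t ⊗ m`, which maps to `t • m`. If
`t • m = 0` then `m ∈ (0 :_M J) = (0 :_R J) • M`, and `t ⊗ (a • x) = (a t) ⊗ x = 0` for every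
`a ∈ (0 :_R J)`, so `t ⊗ m = 0`. The range is `J • M` for every ideal, by right exactness of `⊗`.
-/

section

open TensorProduct Submodule

variable {R : Type*} [CommRing R] {M : Type*} [AddCommGroup M] [Module R M]

variable (M) in
theorem Ideal.range_lift_lsmul_comp_subtype (J : Ideal R) :
    LinearMap.range (lift ((LinearMap.lsmul R M).comp J.subtype)) = J • (⊤ : Submodule R M) := by
  rw [← LinearMap.lid_comp_rTensor, Ideal.subtype_rTensor_range]

theorem Ideal.tmul_eq_zero_of_mem_torsionBySet_smul {J : Ideal R} (j : J) {x : M}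
    (hx : x ∈ (torsionBySet R R (J : Set R) : Ideal R) • (⊤ : Submodule R M)) :
    j ⊗ₜ[R] x = 0 := by
  refine Submodule.smul_induction_on hx (fun a ha n _ ↦ ?_) fun x y hx hy ↦ ?_
  · have haj : a • j = 0 := Subtype.ext <| by
      simpa [mul_comm] using (mem_torsionBySet_iff _ _).mp ha j
    rw [tmul_smul, smul_tmul', haj, zero_tmul]
  · rw [tmul_add, hx, hy, add_zero]

variable (M) in
theorem Ideal.mk_span_singleton_surjective (t : R) :
    Function.Surjective (mk R (Ideal.span {t}) M ⟨t, Ideal.mem_span_singleton_self t⟩) := by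
  rw [← LinearMap.range_eq_top, eq_top_iff, ← span_tmul_eq_top, Submodule.span_le]
  rintro _ ⟨⟨j, hj⟩, m, rfl⟩
  obtain ⟨r, rfl⟩ := Submodule.mem_span_singleton.mp hj
  exact ⟨r • m, by rw [mk_apply, tmul_smul, smul_tmul']; rfl⟩

end

/-- Let `R` be a commutative ring, `M` an `R`-module, `t ∈ R` and
`J = (t)` the principal ideal generated by `t`. If `(0 :_M J) = (0 :_R J) • M`, then the
natural map `J ⊗[R] M → J • M`, `j ⊗ x ↦ j • x`, is an isomorphism; i.e. the natural map
`J ⊗[R] M → M` is injective with range exactly the submodule `J • M`. -/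
theorem tensor_with_principal_ideal_isomorphism
    {R : Type*} [CommRing R] {M : Type*} [AddCommGroup M] [Module R M]
    (t : R) (J : Ideal R) (hJ : J = Ideal.span {t})
    (h : Submodule.torsionBySet R M (J : Set R) =
      (Submodule.torsionBySet R R (J : Set R) : Ideal R) • (⊤ : Submodule R M)) :
    Function.Injective
      (TensorProduct.lift ((LinearMap.lsmul R M).comp J.subtype)) ∧
    LinearMap.range (TensorProduct.lift ((LinearMap.lsmul R M).comp J.subtype)) =
      J • (⊤ : Submodule R M) := by
  subst hJ
  refine ⟨?_, (Ideal.span {t}).range_lift_lsmul_comp_subtype M⟩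
  rw [injective_iff_map_eq_zero]
  intro x hx
  obtain ⟨m, rfl⟩ := Ideal.mk_span_singleton_surjective M t x
  have hm : m ∈ Submodule.torsionBySet R M (Ideal.span {t} : Set R) := by
    rw [← Ideal.submodule_span_eq, Submodule.torsionBySet_span_singleton_eq,
      Submodule.mem_torsionBy_iff]
    simpa using hx
  rw [h] at hm
  exact Ideal.tmul_eq_zero_of_mem_torsionBySet_smul _ hm
end

section
/- Let k be a field of characteristic 0, let (T, n) be a noetherian local k-algebra, and fix i ∈ ℕ. Then T has liftable i-th local cohomology over k if and only if T has liftable i-th local cohomology over ℤ. -/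
/-!
Every `k`-algebra isomorphism is a ring isomorphism, so liftability over `ℤ` implies
liftability over `k`. Conversely, let `I ⊆ R` be nilpotent with `R ⧸ I ≅ T` as rings. Nonzero
integers are units in `R ⧸ I`, hence in `R`, so `R` is a `ℚ`-algebra; and a field `k` of
characteristic zero is formally smooth over `ℚ`, being separable algebraic over a purely
transcendental extension. Hence `k → T ≅ R ⧸ I` lifts to `k → R`, and for the resulting
`k`-algebra structure on `R` the isomorphism `R ⧸ I ≅ T` is `k`-linear.
-/

universe u v w

/-- A noetherian local `A`-algebra `T` has *liftable `i`-th local cohomology over `A`* if for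
every noetherian local `A`-algebra `(R, m)` and every nilpotent ideal `I ⊆ R` with an
`A`-algebra isomorphism `R ⧸ I ≅ T`, the natural map on local cohomology
`H^i_m(R) → H^i_m(R ⧸ I)` is surjective. -/
def HasLiftableLocalCohomology (A : Type u) [CommRing A]
    (T : Type v) [CommRing T] [Algebra A T] (i : ℕ) : Prop :=
  ∀ (R : Type w) [CommRing R] [IsNoetherianRing R] [IsLocalRing R] [Algebra A R]
    (I : Ideal R), IsNilpotent I → Nonempty ((R ⧸ I) ≃ₐ[A] T) →
    Function.Surjective
      ((localCohomology (IsLocalRing.maximalIdeal R) i).map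
        (ModuleCat.ofHom (Submodule.mkQ I)))

section

variable {R : Type*} [CommRing R] {I : Ideal R}

theorem Ideal.le_jacobson_bot_of_isNilpotent (hI : IsNilpotent I) :
    I ≤ (⊥ : Ideal R).jacobson := by
  obtain ⟨n, hn⟩ := hI
  refine fun x hx ↦ Ideal.mem_jacobson_bot.2 fun y ↦ IsNilpotent.isUnit_add_one ⟨n, ?_⟩
  simpa [hn] using Ideal.pow_mem_pow (I.mul_mem_right y hx) n

theorem Ideal.isLocalHom_quotientMk_of_isNilpotent (hI : IsNilpotent I) :
    IsLocalHom (Ideal.Quotient.mk I) :=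
  isLocalHom_of_le_jacobson_bot I (Ideal.le_jacobson_bot_of_isNilpotent hI)

theorem Ideal.nonempty_ratHom_of_isNilpotent (hI : IsNilpotent I) (f : ℚ →+* R ⧸ I) :
    Nonempty (ℚ →+* R) := by
  have := Ideal.isLocalHom_quotientMk_of_isNilpotent hI
  refine ⟨IsLocalization.lift (M := nonZeroDivisors ℤ) (g := algebraMap ℤ R) fun m ↦ ?_⟩
  refine isUnit_of_map_unit (Ideal.Quotient.mk I) _ ?_
  have hm : Ideal.Quotient.mk I (algebraMap ℤ R m) = f (algebraMap ℤ ℚ m) := by simp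
  exact hm ▸ (IsLocalization.map_units ℚ m).map f

end

theorem Algebra.FormallySmooth.of_charZero (K L : Type*) [Field K] [Field L] [CharZero K]
    [Algebra K L] : Algebra.FormallySmooth K L := by
  obtain ⟨s, hs⟩ := exists_isTranscendenceBasis K L
  have := hs.isAlgebraic_field
  exact .of_algebraicIndependent_of_isSeparable hs.1

theorem Ideal.exists_ringHom_lift_of_isNilpotent {k R : Type*} [Field k] [CharZero k]
    [CommRing R] {I : Ideal R} (hI : IsNilpotent I) (φ : k →+* R ⧸ I) :
    ∃ ψ : k →+* R, (Ideal.Quotient.mk I).comp ψ = φ := by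
  obtain ⟨ρ⟩ := Ideal.nonempty_ratHom_of_isNilpotent hI (φ.comp (algebraMap ℚ k))
  let _ := ρ.toAlgebra
  have := Algebra.FormallySmooth.of_charZero ℚ k
  obtain ⟨ψ, hψ⟩ := Algebra.FormallySmooth.exists_lift I hI φ.toRatAlgHom
  exact ⟨ψ, congrArg AlgHom.toRingHom hψ⟩

theorem hasLiftableLocalCohomology_over_field_iff_over_int_general
    (k : Type u) [Field k] [CharZero k]
    (T : Type v) [CommRing T] [Algebra k T] (i : ℕ) :
    HasLiftableLocalCohomology.{u, v, w} k T i ↔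
      HasLiftableLocalCohomology.{0, v, w} ℤ T i := by
  constructor
  · intro h R _ _ _ _ I hI ⟨e⟩
    obtain ⟨ψ, hψ⟩ := Ideal.exists_ringHom_lift_of_isNilpotent hI
      ((e.symm : T →+* R ⧸ I).comp (algebraMap k T))
    let _ := ψ.toAlgebra
    refine h R I hI ⟨AlgEquiv.ofRingEquiv (f := e.toRingEquiv) fun x ↦ ?_⟩
    change e (((Ideal.Quotient.mk I).comp ψ) x) = _
    simp [hψ]
  · intro h R _ _ _ _ I hI ⟨e⟩
    exact h R I hI ⟨e.toRingEquiv.toIntAlgEquiv⟩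

/-- Let `k` be a field of characteristic `0`, `(T, n)` a noetherian local
`k`-algebra, and `i ∈ ℕ`.  Then `T` has liftable `i`-th local cohomology over `k` if and
only if `T` has liftable `i`-th local cohomology over `ℤ` (i.e. where the lifting condition
is required for all noetherian local rings `R`). -/
theorem hasLiftableLocalCohomology_over_field_iff_over_int
    (k : Type u) [Field k] [CharZero k]
    (T : Type v) [CommRing T] [IsNoetherianRing T] [IsLocalRing T] [Algebra k T] (i : ℕ) :
    HasLiftableLocalCohomology.{u, v, w} k T i ↔
      HasLiftableLocalCohomology.{0, v, w} ℤ T i :=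
  hasLiftableLocalCohomology_over_field_iff_over_int_general k T i
end
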